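/- Let ζ = e^{2πi/5} and Z₀ = [[ζ, ζ+ζ³],[ζ², ζ²+ζ]]⁻¹ · [[ζ², ζ⁴],[ζ⁴, ζ³]] ∈ 𝔥₂. Then Θ(0, Z₀; 0, 0) ≠ 0. -/

import Mathlib

open Matrix Complex

noncomputable section

/-- `e z = exp(2πiz)` -/
def e (z : ℂ) : ℂ := Complex.exp (2 * Real.pi * Complex.I * z)

/-- The Siegel upper half-space: symmetric complex matrices with positive definite
imaginary part. -/
def SiegelHalfSpace (g : ℕ) : Set (Matrix (Fin g) (Fin g) ℂ) :=
  {Z | Z.IsSymm ∧ (Matrix.of fun i j => (Z i j).im).PosDef}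

/-- The theta function `Θ(u, Z; r, s)`. -/
def Theta {g : ℕ} (u : Fin g → ℂ) (Z : Matrix (Fin g) (Fin g) ℂ)
    (r s : Fin g → ℝ) : ℂ :=
  ∑' x : Fin g → ℤ,
    e ((fun i => (x i : ℂ) + (r i : ℂ)) ⬝ᵥ Z.mulVec (fun i => (x i : ℂ) + (r i : ℂ)) / 2
      + (fun i => (x i : ℂ) + (r i : ℂ)) ⬝ᵥ (u + fun i => (s i : ℂ)))

/-- The theta constant `Φ_{[r;s]}(Z)`. -/
def PhiTheta {g : ℕ} (r s : Fin g → ℝ) (Z : Matrix (Fin g) (Fin g) ℂ) : ℂ :=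
  Theta 0 Z r s / Theta 0 Z 0 0

/-- The standard symplectic matrix `J`. -/
def Jmat (g : ℕ) : Matrix (Fin g ⊕ Fin g) (Fin g ⊕ Fin g) ℤ :=
  Matrix.fromBlocks 0 (-1) 1 0

/-- Membership in `Sp_{2g}(ℤ)`. -/
def IsSymplectic {g : ℕ} (γ : Matrix (Fin g ⊕ Fin g) (Fin g ⊕ Fin g) ℤ) : Prop :=
  γᵀ * Jmat g * γ = Jmat g

/-- `ζ = e^{2πi/5}`. -/
def zeta5 : ℂ := Complex.exp (2 * Real.pi * Complex.I / 5)

/-- The CM point `Z₀` attached to `ℚ(ζ₅)`. -/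
def Zcm : Matrix (Fin 2) (Fin 2) ℂ :=
  (!![zeta5, zeta5 + zeta5 ^ 3; zeta5 ^ 2, zeta5 ^ 2 + zeta5])⁻¹ *
    !![zeta5 ^ 2, zeta5 ^ 4; zeta5 ^ 4, zeta5 ^ 3]

/-!
By the relations among powers of `ζ`, `Z₀ = [[ζ² - ζ³, -1 - ζ²], [-1 - ζ², -ζ⁴]]`, so
`Im Z₀ = [[2 s₁, -s₁], [-s₁, s₂]]` with `s_k = sin (kπ/5)`. As `s₁ ≤ s₂`, the quadratic
form of `Im Z₀` dominates `s₁ (x₀² + (x₀ - x₁)²)`, so the term of index `x` has modulus at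
most `q ^ (|x₀| + |x₀ - x₁|)` with `q = exp (-π s₁) ≤ 1/6`. Summing this geometric majorant
over the shear `x ↦ (x₀, x₀ - x₁)` of `ℤ²`, the terms with `x ≠ 0` have total modulus at
most `((1 + q)/(1 - q))² - 1 ≤ 24/25`, less than the term `1` at `x = 0`.
-/

open scoped Real

theorem tsum_ne_zero_of_norm_le {α E : Type*} [NormedAddCommGroup E] [CompleteSpace E]
    {f : α → E} {g : α → ℝ} {G : ℝ} (hg : HasSum g G) (hfg : ∀ x, ‖f x‖ ≤ g x) (a : α)
    (h : G - g a < ‖f a‖) : ∑' x, f x ≠ 0 := by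
  classical
  have hrest : ‖∑' x, if x = a then 0 else f x‖ ≤ G - g a :=
    tsum_of_norm_bounded (hasSum_ite_sub_hasSum hg a) fun x => by
      split_ifs <;> simp [hfg]
  rw [(Summable.of_norm_bounded hg.summable hfg).tsum_eq_add_tsum_ite a]
  intro h0
  rw [eq_neg_of_add_eq_zero_left h0, norm_neg] at h
  linarith

theorem hasSum_pow_natAbs {q : ℝ} (h0 : 0 ≤ q) (h1 : q < 1) :
    HasSum (fun n : ℤ => q ^ n.natAbs) ((1 + q) / (1 - q)) := by
  have hneg : HasSum (fun n : ℕ => q ^ (-(n + 1 : ℤ)).natAbs) (q * (1 - q)⁻¹) := by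
    have : (fun n : ℕ => q ^ (-(n + 1 : ℤ)).natAbs) = fun n => q * q ^ n := funext fun n => by
      rw [show (-(n + 1 : ℤ)).natAbs = n + 1 by omega, pow_succ']
    exact this ▸ (hasSum_geometric_of_lt_one h0 h1).mul_left q
  have hsum : (1 + q) / (1 - q) = (1 - q)⁻¹ + q * (1 - q)⁻¹ := by ring
  rw [hsum]
  exact (hasSum_geometric_of_lt_one h0 h1).of_nat_of_neg_add_one hneg

theorem hasSum_pow_natAbs_mul_pow_natAbs_sub {q : ℝ} (h0 : 0 ≤ q) (h1 : q < 1) :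
    HasSum (fun x : Fin 2 → ℤ => q ^ (x 0).natAbs * q ^ (x 0 - x 1).natAbs)
      (((1 + q) / (1 - q)) ^ 2) := by
  have h := hasSum_pow_natAbs h0 h1
  have hprod := h.mul h (h.summable.mul_of_nonneg h.summable (fun _ => by positivity)
    (fun _ => by positivity))
  rw [← sq] at hprod
  have hshear := ((finTwoArrowEquiv ℤ).trans
    (Equiv.prodShear (Equiv.refl ℤ) Equiv.subLeft)).hasSum_iff.2 hprod
  exact hshear

theorem Real.exp_neg_mul_sq_le_pow_natAbs {c : ℝ} (hc : 0 ≤ c) (n : ℤ) :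
    Real.exp (-(c * n ^ 2)) ≤ Real.exp (-c) ^ n.natAbs := by
  rw [← Real.exp_nat_mul, Real.exp_le_exp]
  have habs : (n.natAbs : ℝ) ≤ n ^ 2 := by
    rw [Nat.cast_natAbs]; exact_mod_cast Int.natAbs_le_self_sq n
  nlinarith

theorem norm_e (z : ℂ) : ‖e z‖ = Real.exp (-(2 * π * z.im)) := by
  rw [e, Complex.norm_exp]
  simp [Complex.mul_re]

theorem Theta_zero_eq_tsum {g : ℕ} (Z : Matrix (Fin g) (Fin g) ℂ) :
    Theta 0 Z 0 0 =
      ∑' x : Fin g → ℤ, e ((fun i => (x i : ℂ)) ⬝ᵥ Z *ᵥ (fun i => (x i : ℂ)) / 2) := by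
  simp [Theta]

theorem im_intCast_dotProduct_mulVec {g : ℕ} (Z : Matrix (Fin g) (Fin g) ℂ) (x : Fin g → ℤ) :
    ((fun i => (x i : ℂ)) ⬝ᵥ Z *ᵥ (fun i => (x i : ℂ))).im =
      (fun i => (x i : ℝ)) ⬝ᵥ Z.map im *ᵥ (fun i => (x i : ℝ)) := by
  simp [dotProduct, mulVec, Complex.im_sum, Finset.mul_sum]

theorem norm_e_intCast_dotProduct_mulVec {g : ℕ} (Z : Matrix (Fin g) (Fin g) ℂ)
    (x : Fin g → ℤ) :
    ‖e ((fun i => (x i : ℂ)) ⬝ᵥ Z *ᵥ (fun i => (x i : ℂ)) / 2)‖ =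
      Real.exp (-(π * ((fun i => (x i : ℝ)) ⬝ᵥ Z.map im *ᵥ (fun i => (x i : ℝ))))) := by
  rw [norm_e, Complex.div_ofNat_im, im_intCast_dotProduct_mulVec]
  ring_nf

theorem mul_sq_add_sq_sub_le_dotProduct_mulVec {a b : ℝ} (hab : a ≤ b) (v : Fin 2 → ℝ) :
    a * (v 0 ^ 2 + (v 0 - v 1) ^ 2) ≤ v ⬝ᵥ !![2 * a, -a; -a, b] *ᵥ v := by
  simp only [dotProduct, mulVec, Fin.sum_univ_two, cons_val_zero, cons_val_one, of_apply]
  nlinarith [mul_nonneg (sub_nonneg.2 hab) (sq_nonneg (v 1))]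

theorem zeta5_isPrimitiveRoot : IsPrimitiveRoot zeta5 5 := by
  simpa [zeta5] using Complex.isPrimitiveRoot_exp 5 (by norm_num)

theorem im_zeta5_pow (k : ℕ) : (zeta5 ^ k).im = Real.sin (2 * π * k / 5) := by
  rw [zeta5, ← Complex.exp_nat_mul,
    show (k : ℂ) * (2 * π * I / 5) = (2 * π * k / 5 : ℝ) * I by push_cast; ring,
    Complex.exp_ofReal_mul_I_im]

theorem Zcm_eq : Zcm = !![zeta5 ^ 2 - zeta5 ^ 3, -1 - zeta5 ^ 2; -1 - zeta5 ^ 2, -zeta5 ^ 4] := by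
  have hζ := zeta5_isPrimitiveRoot
  have hsum : 1 + zeta5 + zeta5 ^ 2 + zeta5 ^ 3 + zeta5 ^ 4 = 0 := by
    simpa [Finset.sum_range_succ] using hζ.geom_sum_eq_zero (by norm_num)
  set A : Matrix (Fin 2) (Fin 2) ℂ := !![zeta5, zeta5 + zeta5 ^ 3; zeta5 ^ 2, zeta5 ^ 2 + zeta5]
  have hdet : IsUnit A.det := by
    rw [isUnit_iff_ne_zero, det_fin_two_of]
    intro h
    exact hζ.pow_ne_one_of_pos_of_lt (l := 2) (by norm_num) (by norm_num)
      (by linear_combination h + hζ.pow_eq_one)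
  have hAM : A * !![zeta5 ^ 2 - zeta5 ^ 3, -1 - zeta5 ^ 2; -1 - zeta5 ^ 2, -zeta5 ^ 4] =
      !![zeta5 ^ 2, zeta5 ^ 4; zeta5 ^ 4, zeta5 ^ 3] := by
    ext i j
    fin_cases i <;> fin_cases j <;> simp [A, Matrix.mul_apply, Fin.sum_univ_two]
    · linear_combination -zeta5 * hsum
    · linear_combination (-zeta5 + zeta5 ^ 2 - zeta5 ^ 3) * hsum
    · linear_combination -zeta5 * hsum
    · linear_combination -zeta5 ^ 2 * hsum
  rw [Zcm, ← hAM, nonsing_inv_mul_cancel_left _ _ hdet]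

theorem Zcm_map_im :
    Zcm.map im =
      !![2 * Real.sin (π / 5), -Real.sin (π / 5); -Real.sin (π / 5), Real.sin (2 * π / 5)] := by
  have h2 : (zeta5 ^ 2).im = Real.sin (π / 5) := by
    rw [im_zeta5_pow, ← Real.sin_pi_sub]; ring_nf
  have h3 : (zeta5 ^ 3).im = -Real.sin (π / 5) := by
    rw [im_zeta5_pow, ← Real.sin_add_pi]; ring_nf
  have h4 : (zeta5 ^ 4).im = -Real.sin (2 * π / 5) := by
    rw [im_zeta5_pow, ← Real.sin_sub_two_pi, ← Real.sin_neg]; ring_nf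
  ext i j
  fin_cases i <;> fin_cases j <;> simp [Zcm_eq, h2, h3, h4]
  ring

theorem le_sin_pi_div_five : (0.58 : ℝ) ≤ Real.sin (π / 5) := by
  have hsq : Real.sin (π / 5) ^ 2 = 1 - ((1 + √5) / 4) ^ 2 := by
    rw [Real.sin_sq, Real.cos_pi_div_five]
  have h5 : √5 ^ 2 = 5 := Real.sq_sqrt (by norm_num)
  have hsqrt5 : √5 ≤ 2.2361 := by nlinarith [Real.sqrt_nonneg 5]
  have hsin0 : 0 ≤ Real.sin (π / 5) :=
    Real.sin_nonneg_of_nonneg_of_le_pi (by positivity) (by linarith [Real.pi_pos])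
  nlinarith [Real.sqrt_nonneg 5]

theorem exp_neg_pi_mul_sin_pi_div_five_le : Real.exp (-(π * Real.sin (π / 5))) ≤ 1 / 6 := by
  rw [Real.exp_neg, inv_le_comm₀ (Real.exp_pos _) (by norm_num), one_div, inv_inv]
  calc (6 : ℝ) ≤ ∑ i ∈ Finset.range 7, (1.82 : ℝ) ^ i / i.factorial := by
        simp only [Finset.sum_range_succ, Finset.sum_range_zero, Nat.factorial]
        norm_num
    _ ≤ Real.exp 1.82 := Real.sum_le_exp_of_nonneg (by norm_num) 7
    _ ≤ Real.exp (π * Real.sin (π / 5)) := by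
        gcongr
        nlinarith [Real.pi_gt_d2, le_sin_pi_div_five]

theorem norm_e_Zcm_le (x : Fin 2 → ℤ) :
    ‖e ((fun i => (x i : ℂ)) ⬝ᵥ Zcm *ᵥ (fun i => (x i : ℂ)) / 2)‖ ≤
      Real.exp (-(π * Real.sin (π / 5))) ^ (x 0).natAbs *
        Real.exp (-(π * Real.sin (π / 5))) ^ (x 0 - x 1).natAbs := by
  have hs : 0 ≤ π * Real.sin (π / 5) :=
    mul_nonneg Real.pi_pos.le (by linarith [le_sin_pi_div_five])
  have hs12 : Real.sin (π / 5) ≤ Real.sin (2 * π / 5) :=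
    Real.sin_le_sin_of_le_of_le_pi_div_two (by linarith [Real.pi_pos]) (by linarith [Real.pi_pos])
      (by linarith [Real.pi_pos])
  rw [norm_e_intCast_dotProduct_mulVec, Zcm_map_im]
  calc Real.exp (-(π * _))
      ≤ Real.exp (-(π * Real.sin (π / 5) * (x 0 : ℝ) ^ 2)) *
          Real.exp (-(π * Real.sin (π / 5) * ((x 0 - x 1 : ℤ) : ℝ) ^ 2)) := by
        rw [← Real.exp_add, Real.exp_le_exp]
        have := mul_sq_add_sq_sub_le_dotProduct_mulVec hs12 (fun i => (x i : ℝ))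
        push_cast
        nlinarith [Real.pi_pos]
    _ ≤ _ := by
        gcongr <;> exact Real.exp_neg_mul_sq_le_pow_natAbs hs _

/-- The theta constant denominator does not vanish at the CM point `Z₀`. -/
theorem theta_Zcm_ne_zero : Theta 0 Zcm 0 0 ≠ 0 := by
  have hq := exp_neg_pi_mul_sin_pi_div_five_le
  set q := Real.exp (-(π * Real.sin (π / 5)))
  have hq0 : 0 ≤ q := (Real.exp_pos _).le
  have hratio : (1 + q) / (1 - q) ≤ 7 / 5 := by
    rw [div_le_iff₀ (by linarith)]; linarith
  have hmajorant : ((1 + q) / (1 - q)) ^ 2 - 1 < 1 := by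
    nlinarith [div_nonneg (by linarith : 0 ≤ 1 + q) (by linarith : 0 ≤ 1 - q)]
  rw [Theta_zero_eq_tsum]
  refine tsum_ne_zero_of_norm_le (hasSum_pow_natAbs_mul_pow_natAbs_sub hq0 (by linarith))
    norm_e_Zcm_le 0 ?_
  simpa [e] using hmajorant
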